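/- Let δ: (0,∞) → [0,∞) and for fixed ρ > 0 treat N_S as a real parameter with δ satisfying δ = (1/N_S) tr(T M) where M = (I + α T)^{-1} and α = ρ/(1+ρδ). Then the partial derivative of ρ̄ = log det(I + α T) + N_S log(1+ρδ) − N_S ρδ/(1+ρδ) with respect to N_S equals log(1+ρδ) − ρδ/(1+ρδ), which is nonnegative; hence ρ̄ is nondecreasing in N_S. -/

import Mathlib

open scoped ComplexOrder


section AuxStmt11
open Matrix

lemma aux_decomp {NT : ℕ} (T : Matrix (Fin NT) (Fin NT) ℂ) (hT : T.PosSemidef) (a : ℝ) :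
    1 + (a : ℂ) • T =
      (hT.1.eigenvectorUnitary : Matrix (Fin NT) (Fin NT) ℂ) *
        Matrix.diagonal (fun i => ((1 + a * hT.1.eigenvalues i : ℝ) : ℂ)) *
        star (hT.1.eigenvectorUnitary : Matrix (Fin NT) (Fin NT) ℂ) := by
  set U := (hT.1.eigenvectorUnitary : Matrix (Fin NT) (Fin NT) ℂ)
  have hU : U * star U = 1 := (Matrix.mem_unitaryGroup_iff).mp hT.1.eigenvectorUnitary.2
  have hspec := hT.1.spectral_theorem
  rw [Unitary.conjStarAlgAut_apply] at hspec
  have hsm : (a:ℂ) • (U * Matrix.diagonal (RCLike.ofReal ∘ hT.1.eigenvalues) * star U)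
      = U * ((a:ℂ) • Matrix.diagonal (RCLike.ofReal ∘ hT.1.eigenvalues)) * star U := by
    rw [mul_smul_comm, smul_mul_assoc]
  calc 1 + (a : ℂ) • T
      = U * 1 * star U + (a:ℂ) • (U * Matrix.diagonal (RCLike.ofReal ∘ hT.1.eigenvalues) * star U) := by
        rw [mul_one, hU, ← hspec]
    _ = (hT.1.eigenvectorUnitary : Matrix (Fin NT) (Fin NT) ℂ) *
        Matrix.diagonal (fun i => ((1 + a * hT.1.eigenvalues i : ℝ) : ℂ)) *
        star (hT.1.eigenvectorUnitary : Matrix (Fin NT) (Fin NT) ℂ) := by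
        rw [hsm, ← Matrix.add_mul, ← Matrix.mul_add,
          ← Matrix.diagonal_one, ← Matrix.diagonal_smul, Matrix.diagonal_add]
        congr 2
        funext i
        simp [Function.comp]

lemma aux_det_re {NT : ℕ} (T : Matrix (Fin NT) (Fin NT) ℂ) (hT : T.PosSemidef) (a : ℝ) :
    (1 + (a : ℂ) • T).det.re = ∏ i, (1 + a * hT.1.eigenvalues i) := by
  set U := (hT.1.eigenvectorUnitary : Matrix (Fin NT) (Fin NT) ℂ) with hUdef
  have hU : U * star U = 1 := (Matrix.mem_unitaryGroup_iff).mp hT.1.eigenvectorUnitary.2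
  rw [aux_decomp T hT a]
  have hU' : star U * U = 1 := (Matrix.mem_unitaryGroup_iff').mp hT.1.eigenvectorUnitary.2
  rw [Matrix.det_mul, Matrix.det_mul, mul_right_comm, ← Matrix.det_mul, hU,
    Matrix.det_one, one_mul, Matrix.det_diagonal]
  norm_cast

lemma aux_inv {NT : ℕ} (T : Matrix (Fin NT) (Fin NT) ℂ) (hT : T.PosSemidef) (a : ℝ)
    (ha : 0 ≤ a) :
    (1 + (a : ℂ) • T)⁻¹ =
      (hT.1.eigenvectorUnitary : Matrix (Fin NT) (Fin NT) ℂ) *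
        Matrix.diagonal (fun i => (((1 + a * hT.1.eigenvalues i)⁻¹ : ℝ) : ℂ)) *
        star (hT.1.eigenvectorUnitary : Matrix (Fin NT) (Fin NT) ℂ) := by
  set U := (hT.1.eigenvectorUnitary : Matrix (Fin NT) (Fin NT) ℂ)
  have hU : U * star U = 1 := (Matrix.mem_unitaryGroup_iff).mp hT.1.eigenvectorUnitary.2
  have hU' : star U * U = 1 := (Matrix.mem_unitaryGroup_iff').mp hT.1.eigenvectorUnitary.2
  apply Matrix.inv_eq_right_inv
  rw [aux_decomp T hT a]
  have hne : ∀ i, (1 + a * hT.1.eigenvalues i) ≠ 0 := fun i => by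
    have := hT.eigenvalues_nonneg i
    positivity
  calc (U * Matrix.diagonal (fun i => ((1 + a * hT.1.eigenvalues i : ℝ) : ℂ)) * star U) *
        (U * Matrix.diagonal (fun i => (((1 + a * hT.1.eigenvalues i)⁻¹ : ℝ) : ℂ)) * star U)
      = U * (Matrix.diagonal (fun i => ((1 + a * hT.1.eigenvalues i : ℝ) : ℂ)) * ((star U * U) *
          Matrix.diagonal (fun i => (((1 + a * hT.1.eigenvalues i)⁻¹ : ℝ) : ℂ)))) * star U := by
        simp only [Matrix.mul_assoc]
    _ = 1 := by
        rw [hU', one_mul, Matrix.diagonal_mul_diagonal]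
        have : (fun i => ((1 + a * hT.1.eigenvalues i : ℝ) : ℂ) * (((1 + a * hT.1.eigenvalues i)⁻¹ : ℝ) : ℂ)) = fun _ => (1:ℂ) := by
          funext i
          rw [← Complex.ofReal_mul, mul_inv_cancel₀ (hne i)]
          simp
        rw [this, Matrix.diagonal_one, mul_one, hU]

lemma aux_trace_re {NT : ℕ} (T : Matrix (Fin NT) (Fin NT) ℂ) (hT : T.PosSemidef) (a : ℝ)
    (ha : 0 ≤ a) :
    (Matrix.trace (T * (1 + (a : ℂ) • T)⁻¹)).re
      = ∑ i, hT.1.eigenvalues i * (1 + a * hT.1.eigenvalues i)⁻¹ := by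
  set U := (hT.1.eigenvectorUnitary : Matrix (Fin NT) (Fin NT) ℂ)
  have hU' : star U * U = 1 := (Matrix.mem_unitaryGroup_iff').mp hT.1.eigenvectorUnitary.2
  rw [aux_inv T hT a ha]
  have h1 := congrArg
    (· * ((hT.1.eigenvectorUnitary : Matrix (Fin NT) (Fin NT) ℂ) *
        Matrix.diagonal (fun i => (((1 + a * hT.1.eigenvalues i)⁻¹ : ℝ) : ℂ)) *
        star (hT.1.eigenvectorUnitary : Matrix (Fin NT) (Fin NT) ℂ)))
    hT.1.spectral_theorem
  simp only [Unitary.conjStarAlgAut_apply] at h1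
  rw [h1]
  have h2 : (U * Matrix.diagonal (RCLike.ofReal ∘ hT.1.eigenvalues) * star U) *
      (U * Matrix.diagonal (fun i => (((1 + a * hT.1.eigenvalues i)⁻¹ : ℝ) : ℂ)) * star U)
      = U * (Matrix.diagonal (RCLike.ofReal ∘ hT.1.eigenvalues) *
          Matrix.diagonal (fun i => (((1 + a * hT.1.eigenvalues i)⁻¹ : ℝ) : ℂ))) * star U := by
    simp only [Matrix.mul_assoc]
    rw [← Matrix.mul_assoc (star U), hU', one_mul]
  rw [h2, Matrix.trace_mul_cycle, ← Matrix.mul_assoc, hU', one_mul,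
    Matrix.diagonal_mul_diagonal, Matrix.trace_diagonal]
  have : ∀ i : Fin NT, (RCLike.ofReal ∘ hT.1.eigenvalues) i * (((1 + a * hT.1.eigenvalues i)⁻¹ : ℝ) : ℂ)
      = ((hT.1.eigenvalues i * (1 + a * hT.1.eigenvalues i)⁻¹ : ℝ) : ℂ) := by
    intro i
    simp [Function.comp]
  rw [Finset.sum_congr rfl (fun i _ => this i), ← Complex.ofReal_sum, Complex.ofReal_re]

end AuxStmt11

/-- The derivative of the deterministic equivalent `ρ̄` with respect to the (real)
number of frames `N_S` equals `log(1+ρδ) − ρδ/(1+ρδ) ≥ 0`; hence `ρ̄` is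
nondecreasing in `N_S`. -/
theorem stmt_11 {NT : ℕ} (T : Matrix (Fin NT) (Fin NT) ℂ) (hT : T.PosSemidef)
    (ρ : ℝ) (hρ : 0 < ρ) (δ : ℝ → ℝ) (hδ0 : ∀ s, 0 ≤ δ s)
    (hδdiff : ∀ s ∈ Set.Ioi (0 : ℝ), DifferentiableAt ℝ δ s)
    (hfix : ∀ s ∈ Set.Ioi (0 : ℝ),
      δ s = (1 / s) *
        (Matrix.trace (T * (1 + ((ρ / (1 + ρ * δ s) : ℝ) : ℂ) • T)⁻¹)).re) :
    (∀ s ∈ Set.Ioi (0 : ℝ),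
      HasDerivAt (fun t : ℝ =>
          Real.log ((1 + ((ρ / (1 + ρ * δ t) : ℝ) : ℂ) • T).det.re)
            + t * Real.log (1 + ρ * δ t) - t * (ρ * δ t) / (1 + ρ * δ t))
        (Real.log (1 + ρ * δ s) - ρ * δ s / (1 + ρ * δ s)) s
      ∧ 0 ≤ Real.log (1 + ρ * δ s) - ρ * δ s / (1 + ρ * δ s)) ∧
    MonotoneOn (fun t : ℝ =>
        Real.log ((1 + ((ρ / (1 + ρ * δ t) : ℝ) : ℂ) • T).det.re)
          + t * Real.log (1 + ρ * δ t) - t * (ρ * δ t) / (1 + ρ * δ t))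
      (Set.Ioi (0 : ℝ)) := by
  set lam := hT.1.eigenvalues with hlam
  have hb : ∀ t, 0 < 1 + ρ * δ t := fun t => by nlinarith [mul_nonneg hρ.le (hδ0 t)]
  have hα_pos : ∀ t, 0 < ρ / (1 + ρ * δ t) := fun t => div_pos hρ (hb t)
  have hlamnn : ∀ i, 0 ≤ lam i := fun i => hT.eigenvalues_nonneg i
  have hfac : ∀ (t : ℝ) i, 0 < 1 + (ρ / (1 + ρ * δ t)) * lam i := fun t i => by
    nlinarith [mul_nonneg (hα_pos t).le (hlamnn i)]
  -- rewrite the log-det term as a sum of logs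
  have hfun : (fun t : ℝ =>
          Real.log ((1 + ((ρ / (1 + ρ * δ t) : ℝ) : ℂ) • T).det.re)
            + t * Real.log (1 + ρ * δ t) - t * (ρ * δ t) / (1 + ρ * δ t))
      = (fun t : ℝ =>
          (∑ i, Real.log (1 + (ρ / (1 + ρ * δ t)) * lam i))
            + t * Real.log (1 + ρ * δ t) - t * (ρ * δ t) / (1 + ρ * δ t)) := by
    funext t
    rw [aux_det_re T hT, Real.log_prod (fun i _ => (hfac t i).ne')]
  -- main derivative claim
  have key : ∀ s ∈ Set.Ioi (0 : ℝ),
      HasDerivAt (fun t : ℝ =>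
          (∑ i, Real.log (1 + (ρ / (1 + ρ * δ t)) * lam i))
            + t * Real.log (1 + ρ * δ t) - t * (ρ * δ t) / (1 + ρ * δ t))
        (Real.log (1 + ρ * δ s) - ρ * δ s / (1 + ρ * δ s)) s := by
    intro s hs
    have hs0 : (0:ℝ) < s := hs
    set d := deriv δ s with hdd
    have hd : HasDerivAt δ d s := (hδdiff s hs).hasDerivAt
    set b := 1 + ρ * δ s with hbdef
    have hb0 : (0:ℝ) < b := hb s
    have hden : HasDerivAt (fun t => 1 + ρ * δ t) (ρ * d) s := (hd.const_mul ρ).const_add 1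
    set α' : ℝ := ρ * (-(ρ * d) / b ^ 2) with hα'
    have hα : HasDerivAt (fun t => ρ / (1 + ρ * δ t)) α' s := by
      simp only [div_eq_mul_inv]
      exact (hden.inv hb0.ne').const_mul ρ
    have hsum : HasDerivAt (fun t : ℝ => ∑ i, Real.log (1 + (ρ / (1 + ρ * δ t)) * lam i))
        (∑ i, (α' * lam i) / (1 + (ρ / (1 + ρ * δ s)) * lam i)) s := by
      apply HasDerivAt.fun_sum
      intro i _
      exact (((hα.mul_const (lam i)).const_add 1).log (hfac s i).ne')
    -- the fixed point identity gives the value of the sum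
    have htr : s * δ s = ∑ i, lam i * (1 + (ρ / (1 + ρ * δ s)) * lam i)⁻¹ := by
      have h := hfix s hs
      rw [aux_trace_re T hT _ (hα_pos s).le, ← hlam] at h
      calc s * δ s = s * ((1 / s) * ∑ i, lam i * (1 + (ρ / (1 + ρ * δ s)) * lam i)⁻¹) := by
            rw [← h]
        _ = _ := by rw [← mul_assoc, mul_one_div_cancel hs0.ne', one_mul]
    have hvalue : (∑ i, (α' * lam i) / (1 + (ρ / (1 + ρ * δ s)) * lam i))
        = α' * (s * δ s) := by
      rw [htr, Finset.mul_sum]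
      refine Finset.sum_congr rfl fun i _ => ?_
      rw [div_eq_mul_inv]; ring
    rw [hvalue] at hsum
    have h2 : HasDerivAt (fun t : ℝ => t * Real.log (1 + ρ * δ t))
        (1 * Real.log b + s * (ρ * d / b)) s :=
      (hasDerivAt_id s).mul (hden.log hb0.ne')
    have h3 : HasDerivAt (fun t : ℝ => t * (ρ * δ t) / (1 + ρ * δ t))
        (((1 * (ρ * δ s) + s * (ρ * d)) * b - s * (ρ * δ s) * (ρ * d)) / b ^ 2) s :=
      ((hasDerivAt_id s).mul (hd.const_mul ρ)).div hden hb0.ne'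
    have htot := (hsum.add h2).sub h3
    refine htot.congr_deriv ?_
    rw [hα']
    field_simp
    ring
  have hnn : ∀ s, 0 ≤ Real.log (1 + ρ * δ s) - ρ * δ s / (1 + ρ * δ s) := by
    intro s
    have hx : 0 ≤ ρ * δ s := mul_nonneg hρ.le (hδ0 s)
    have hb0 := hb s
    have h := Real.log_le_sub_one_of_pos (inv_pos.mpr hb0)
    rw [Real.log_inv] at h
    have : (1 + ρ * δ s)⁻¹ - 1 = -(ρ * δ s / (1 + ρ * δ s)) := by field_simp; ring
    linarith [this ▸ h]
  rw [hfun]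
  refine ⟨fun s hs => ⟨key s hs, hnn s⟩, ?_⟩
  apply monotoneOn_of_deriv_nonneg (convex_Ioi 0)
  · exact fun x hx => ((key x hx).differentiableAt.continuousAt.continuousWithinAt)
  · intro x hx
    rw [interior_Ioi] at hx
    exact (key x hx).differentiableAt.differentiableWithinAt
  · intro x hx
    rw [interior_Ioi] at hx
    rw [(key x hx).deriv]
    exact hnn x
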